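/- arXiv:0910.0566 — 6 statements merged into one kernel-verified Lean document; each statement's English description precedes it below -/
import Mathlib

section
/- Let x⁰ ∈ [0,1]^n with x⁰_1 ≥ ... ≥ x⁰_n, let k ∈ {1,...,n}, and let m be the largest index with x⁰_m ≥ x⁰_k (so that x⁰_j < x⁰_k exactly for j > m). Then the set S = { x ∈ [0,1]^n : x_k < x⁰_k, or x_j > x⁰_j for some j with m+1 ≤ j ≤ n } is max-min convex. -/
/-!
Since `max α β = 1`, up to swapping the two points a point of the max-min segment is
`z = max x (min β y)`. If `x` lies in `S` through a coordinate `j > m` then so does `z`, as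
`z ≥ x`. Otherwise `x_k < x⁰_k`, and `z_k < x⁰_k` unless `β ≥ x⁰_k`; in that case `min β y_j > x⁰_j`
for the coordinate `j > m` witnessing `y ∈ S` (if `y_k < x⁰_k` already `z_k < x⁰_k`), because
`x⁰_j < x⁰_k` by the choice of `m`.
-/

open unitInterval

noncomputable def segPt {n : ℕ} (α β : I) (x y : Fin n → I) : Fin n → I :=
  fun i => max (min α (x i)) (min β (y i))

def MaxMinConvex {n : ℕ} (C : Set (Fin n → I)) : Prop :=
  ∀ x ∈ C, ∀ y ∈ C, ∀ α β : I, max α β = 1 → segPt α β x y ∈ C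

def maxMinSegment {n : ℕ} (x y : Fin n → I) : Set (Fin n → I) :=
  {z | ∃ α β : I, max α β = 1 ∧ z = segPt α β x y}

lemma segPt_comm {n : ℕ} (α β : I) (x y : Fin n → I) : segPt α β x y = segPt β α y x :=
  funext fun _ => max_comm _ _

lemma segPt_one_left {n : ℕ} (β : I) (x y : Fin n → I) :
    segPt 1 β x y = fun i => max (x i) (min β (y i)) :=
  funext fun i => by rw [segPt, min_eq_right (le_one' : x i ≤ 1)]

lemma maxMinConvex_of_forall_max_min_mem {n : ℕ} {C : Set (Fin n → I)}
    (h : ∀ x ∈ C, ∀ y ∈ C, ∀ β : I, (fun i => max (x i) (min β (y i))) ∈ C) :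
    MaxMinConvex C := by
  intro x hx y hy α β hαβ
  rcases max_choice α β with hα | hβ
  · obtain rfl : α = 1 := hα ▸ hαβ
    rw [segPt_one_left]
    exact h x hx y hy β
  · obtain rfl : β = 1 := hβ ▸ hαβ
    rw [segPt_comm, segPt_one_left]
    exact h y hy x hx α

lemma max_min_mem_of_lt_at {ι α : Type*} [LinearOrder α] {a : ι → α} {k : ι} {J : Set ι}
    (hJ : ∀ j ∈ J, a j < a k) {x y : ι → α} (hx : x k < a k ∨ ∃ j ∈ J, a j < x j)
    (hy : y k < a k ∨ ∃ j ∈ J, a j < y j) (β : α) :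
    max (x k) (min β (y k)) < a k ∨ ∃ j ∈ J, a j < max (x j) (min β (y j)) := by
  rcases hx with hxk | ⟨j, hj, hxj⟩
  · rcases hy with hyk | ⟨j, hj, hyj⟩
    · exact Or.inl (max_lt hxk (min_lt_of_right_lt hyk))
    · by_cases hβ : β < a k
      · exact Or.inl (max_lt hxk (min_lt_of_left_lt hβ))
      · exact Or.inr ⟨j, hj, lt_max_of_lt_right (lt_min ((hJ j hj).trans_le (not_lt.mp hβ)) hyj)⟩
  · exact Or.inr ⟨j, hj, lt_max_of_lt_left hxj⟩

theorem stmt5_general {n : ℕ} (x0 : Fin n → I)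
    (k m : Fin n)
    (hmax : ∀ j : Fin n, x0 k ≤ x0 j → j ≤ m) :
    MaxMinConvex {x : Fin n → I | x k < x0 k ∨ ∃ j : Fin n, m < j ∧ x0 j < x j} := by
  have hbelow : ∀ j ∈ Set.Ioi m, x0 j < x0 k :=
    fun j hj => lt_of_not_ge fun h => (hmax j h).not_gt hj
  exact maxMinConvex_of_forall_max_min_mem fun x hx y hy β =>
    max_min_mem_of_lt_at hbelow hx hy β

theorem stmt5 {n : ℕ} (x0 : Fin n → I)
    (hsort : ∀ i j : Fin n, i ≤ j → x0 j ≤ x0 i)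
    (k m : Fin n)
    (hm : x0 k ≤ x0 m) (hmax : ∀ j : Fin n, x0 k ≤ x0 j → j ≤ m) :
    MaxMinConvex {x : Fin n → I | x k < x0 k ∨ ∃ j : Fin n, m < j ∧ x0 j < x j} :=
  stmt5_general x0 k m hmax
end

section
/- For any x⁰ ∈ [0,1]^n and any nonempty index set M ⊆ {1,...,n}, the set S_0^M(x⁰) = { x ∈ [0,1]^n : x_i > x⁰_i for some i ∈ M } is max-min convex, and its complement in [0,1]^n is also max-min convex (i.e., S_0^M(x⁰) is a max-min hemispace). -/
open unitInterval

/-! Since `max α β = 1`, the point `segPt α β x y` dominates `x` or `y` and is dominated by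
`x ⊔ y`. Hence upper sets and sup-closed lower sets are max-min convex; the set in question is
an upper set and its complement is a sup-closed lower set. -/

section

variable {n : ℕ}

theorem segPt_le_sup (α β : I) (x y : Fin n → I) : segPt α β x y ≤ x ⊔ y :=
  fun _ => max_le_max (min_le_right _ _) (min_le_right _ _)

theorem le_segPt_or_le_segPt {α β : I} (h : max α β = 1) (x y : Fin n → I) :
    x ≤ segPt α β x y ∨ y ≤ segPt α β x y := by
  rcases max_choice α β with hα | hβ
  · exact .inl fun i => le_max_of_le_left (le_min (le_one'.trans_eq (hα ▸ h).symm) le_rfl)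
  · exact .inr fun i => le_max_of_le_right (le_min (le_one'.trans_eq (hβ ▸ h).symm) le_rfl)

theorem MaxMinConvex.of_isUpperSet {C : Set (Fin n → I)} (hC : IsUpperSet C) :
    MaxMinConvex C := fun x hx y hy _ _ h =>
  (le_segPt_or_le_segPt h x y).elim (hC · hx) (hC · hy)

theorem MaxMinConvex.of_isLowerSet_of_supClosed {C : Set (Fin n → I)} (hC : IsLowerSet C)
    (hsup : SupClosed C) : MaxMinConvex C := fun x hx y hy α β _ =>
  hC (segPt_le_sup α β x y) (hsup hx hy)

end

theorem stmt6_general {n : ℕ} (x0 : Fin n → I) (M : Set (Fin n)) :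
    MaxMinConvex {x : Fin n → I | ∃ i ∈ M, x0 i < x i} ∧
    MaxMinConvex {x : Fin n → I | ∃ i ∈ M, x0 i < x i}ᶜ := by
  have hupper : IsUpperSet {x : Fin n → I | ∃ i ∈ M, x0 i < x i} :=
    fun _ _ hxy ⟨i, hi, hlt⟩ => ⟨i, hi, hlt.trans_le (hxy i)⟩
  have hsup : SupClosed {x : Fin n → I | ∃ i ∈ M, x0 i < x i}ᶜ := by
    intro x hx y hy
    simp only [Set.mem_compl_iff, Set.mem_ofPred_eq, not_exists, not_and, not_lt] at hx hy ⊢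
    exact fun i hi => sup_le (hx i hi) (hy i hi)
  exact ⟨.of_isUpperSet hupper, .of_isLowerSet_of_supClosed hupper.compl hsup⟩

theorem stmt6 {n : ℕ} (x0 : Fin n → I) (M : Set (Fin n)) (hM : M.Nonempty) :
    MaxMinConvex {x : Fin n → I | ∃ i ∈ M, x0 i < x i} ∧
    MaxMinConvex {x : Fin n → I | ∃ i ∈ M, x0 i < x i}ᶜ :=
  stmt6_general x0 M
end

section
/- Let B = [0,1]×[a,b] ⊆ [0,1]^2 with 0 ≤ a ≤ b < 1 and let z = (z_1, z_2) with z_2 > b. Then there is no max-min convex set S ⊆ [0,1]^2 such that z ∈ S and S ∩ B = ∅ and S is maximal among max-min convex sets avoiding every point of B; more concretely, no max-min semispace at any point contains z and avoids B. -/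
/-!
Every point of a semispace `S` containing `z` lies strictly above the strip, since the segment
from `z` down to a point below the strip crosses the level `b`. Hence any `r` at level `b` is
outside `S`, and maximality forces `p` into the max-min cone spanned by `S` and `r`. Doing this for
`r = (0, b)` and `r = (1, b)` pins `p` down to a point of `S` itself.
-/

open unitInterval

def IsSemispaceAt {n : ℕ} (S : Set (Fin n → I)) (p : Fin n → I) : Prop :=
  MaxMinConvex S ∧ p ∉ S ∧
    ∀ S' : Set (Fin n → I), MaxMinConvex S' → p ∉ S' → S ⊆ S' → S' = S

section MaxMin

variable {n : ℕ}

@[simp]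
lemma segPt_apply (α β : I) (x y : Fin n → I) (i : Fin n) :
    segPt α β x y i = max (min α (x i)) (min β (y i)) := rfl

lemma segPt_one_zero (x y : Fin n → I) : segPt 1 0 x y = x := by
  funext i
  simp [min_eq_right le_one']

lemma segPt_zero_one (x y : Fin n → I) : segPt 0 1 x y = y := by
  funext i
  simp [min_eq_right le_one']

lemma segPt_one_left_of_le {x y : Fin n → I} (β : I) (h : y ≤ x) : segPt 1 β x y = x := by
  funext i
  simp [min_eq_right le_one', min_le_of_right_le (h i)]

lemma exists_max_eq_one_min_max_eq (A C : I) :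
    ∃ μ ν : I, max μ ν = 1 ∧ min (max A C) μ = A ∧ min (max A C) ν = C := by
  rcases le_total A C with h | h
  · exact ⟨A, 1, max_eq_right le_one', by rw [max_eq_right h, min_eq_right h],
      by rw [max_eq_right h, min_eq_left le_one']⟩
  · exact ⟨1, C, max_eq_left le_one', by rw [max_eq_left h, min_eq_left le_one'],
      by rw [max_eq_left h, min_eq_right h]⟩

def maxMinCone (S : Set (Fin n → I)) (r : Fin n → I) : Set (Fin n → I) :=
  ⋃ s ∈ S, maxMinSegment s r

lemma mem_maxMinCone {S : Set (Fin n → I)} {r u : Fin n → I} :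
    u ∈ maxMinCone S r ↔ ∃ s ∈ S, ∃ α β : I, max α β = 1 ∧ u = segPt α β s r := by
  simp [maxMinCone, maxMinSegment]

lemma subset_maxMinCone (S : Set (Fin n → I)) (r : Fin n → I) : S ⊆ maxMinCone S r :=
  fun s hs => mem_maxMinCone.2 ⟨s, hs, 1, 0, max_eq_left le_one', (segPt_one_zero s r).symm⟩

lemma mem_maxMinCone_self {S : Set (Fin n → I)} (hS : S.Nonempty) (r : Fin n → I) :
    r ∈ maxMinCone S r :=
  let ⟨s, hs⟩ := hS
  mem_maxMinCone.2 ⟨s, hs, 0, 1, max_eq_right le_one', (segPt_zero_one s r).symm⟩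

/-- Two points of the cone, written through `s, s' ∈ S`, are combined through the point
`segPt μ' ν' s s'` of `S`, where `(μ', ν')` renormalizes the weights of `s` and `s'`. -/
lemma MaxMinConvex.maxMinCone {S : Set (Fin n → I)} (hS : MaxMinConvex S) (r : Fin n → I) :
    MaxMinConvex (maxMinCone S r) := by
  intro u hu v hv μ ν hμν
  obtain ⟨s, hs, α, β, hαβ, rfl⟩ := mem_maxMinCone.1 hu
  obtain ⟨s', hs', γ, δ, hγδ, rfl⟩ := mem_maxMinCone.1 hv
  obtain ⟨μ', ν', h1, hμ', hν'⟩ := exists_max_eq_one_min_max_eq (min μ α) (min ν γ)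
  refine mem_maxMinCone.2 ⟨segPt μ' ν' s s', hS s hs s' hs' μ' ν' h1,
    max (min μ α) (min ν γ), max (min μ β) (min ν δ), ?_, ?_⟩
  · rw [max_max_max_comm, ← min_max_distrib_left, ← min_max_distrib_left, hαβ, hγδ,
      min_eq_left le_one', min_eq_left le_one', hμν]
  · funext i
    have hweights : min (max (min μ α) (min ν γ)) (max (min μ' (s i)) (min ν' (s' i)))
        = max (min (min μ α) (s i)) (min (min ν γ) (s' i)) := by
      rw [min_max_distrib_left, ← min_assoc, ← min_assoc, hμ', hν']
    simp only [segPt_apply]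
    rw [hweights, min_max_distrib_right (min μ β), min_max_distrib_left μ, min_max_distrib_left ν,
      ← min_assoc, ← min_assoc, ← min_assoc, ← min_assoc, max_max_max_comm]

lemma MaxMinConvex.exists_apply_eq {S : Set (Fin n → I)} (hS : MaxMinConvex S) {z s : Fin n → I}
    (hz : z ∈ S) (hs : s ∈ S) {i : Fin n} {c : I} (hsc : s i ≤ c) (hcz : c ≤ z i) :
    ∃ w ∈ S, w i = c :=
  ⟨segPt c 1 z s, hS z hz s hs c 1 (max_eq_right le_one'), by
    simp [min_eq_left hcz, min_eq_right le_one', max_eq_left hsc]⟩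

lemma IsSemispaceAt.mem_maxMinCone {S : Set (Fin n → I)} {p r : Fin n → I}
    (h : IsSemispaceAt S p) (hS : S.Nonempty) (hr : r ∉ S) : p ∈ maxMinCone S r := by
  by_contra hp
  have hcone := h.2.2 _ (h.1.maxMinCone r) hp (subset_maxMinCone S r)
  exact hr (hcone ▸ mem_maxMinCone_self hS r)

end MaxMin

lemma MaxMinConvex.mem_of_eq_segPt_of_eq_segPt {S : Set (Fin 2 → I)} (hS : MaxMinConvex S)
    {s s' p : Fin 2 → I} (hs : s ∈ S) (hs' : s' ∈ S) {b α β α' β' : I} (hsb : b < s 1)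
    (hs'b : b < s' 1) (hαβ' : max α' β' = 1) (hp : p = segPt α β s ![0, b])
    (hp' : p = segPt α' β' s' ![1, b]) : p ∈ S := by
  -- Either `p = s`, or `p 0 < 1` forces `α' = 1`, so that `s' ≤ p`, `s' 1 = p 1` and
  -- `p = segPt α 1 s s'`.
  rcases (le_one' : α ≤ 1).eq_or_lt with rfl | hα
  · rw [hp, segPt_one_left_of_le]
    · exact hs
    · intro i
      fin_cases i
      exacts [nonneg', hsb.le]
  have hp0 : p 0 = min α (s 0) := by simp [hp]
  have hβ' : β' ≠ 1 := by
    rintro rfl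
    have : p 0 = 1 := by simp [hp', le_one']
    exact ((min_le_left α (s 0)).trans_lt hα).ne (hp0 ▸ this)
  obtain rfl : α' = 1 := (max_choice α' β').resolve_right (fun h => hβ' (h ▸ hαβ')) ▸ hαβ'
  have hp1 : p 1 = s' 1 := by
    simp [hp', min_eq_right le_one', (min_le_right β' b).trans hs'b.le]
  have hs'p : s' ≤ p := hp' ▸ fun i => by simp [min_eq_right le_one']
  suffices p = segPt α 1 s s' from this ▸ hS s hs s' hs' α 1 (max_eq_right le_one')
  funext i
  fin_cases i
  · simp [← hp0, max_eq_left (hs'p 0), min_eq_right le_one']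
  · have : min α (s 1) ≤ p 1 := by simp [hp]
    simp [← hp1, max_eq_right this, min_eq_right le_one']

theorem stmt7_general (a b : I) (hab : a ≤ b) (z : Fin 2 → I) (hz : b < z 1) :
    ¬ ∃ (p : Fin 2 → I) (S : Set (Fin 2 → I)), IsSemispaceAt S p ∧ z ∈ S ∧
      S ∩ {w : Fin 2 → I | a ≤ w 1 ∧ w 1 ≤ b} = ∅ := by
  rintro ⟨p, S, hsemi, hzS, hdisj⟩
  have above : ∀ s ∈ S, b < s 1 := by
    intro s hs
    by_contra! hsb
    obtain ⟨w, hw, hwb⟩ := hsemi.1.exists_apply_eq hzS hs hsb hz.le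
    exact (Set.eq_empty_iff_forall_notMem.1 hdisj) w ⟨hw, hwb ▸ hab, hwb.le⟩
  have cone : ∀ r : Fin 2 → I, r 1 = b → p ∈ maxMinCone S r := fun r hr =>
    hsemi.mem_maxMinCone ⟨z, hzS⟩ fun hrS => (above r hrS).ne' hr
  obtain ⟨s, hs, α, β, -, hp⟩ := mem_maxMinCone.1 (cone ![0, b] rfl)
  obtain ⟨s', hs', α', β', hαβ', hp'⟩ := mem_maxMinCone.1 (cone ![1, b] rfl)
  exact hsemi.2.1 (hsemi.1.mem_of_eq_segPt_of_eq_segPt hs hs' (above s hs) (above s' hs')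
    hαβ' hp hp')

theorem stmt7 (a b : I) (hab : a ≤ b) (hb : b < 1) (z : Fin 2 → I) (hz : b < z 1) :
    ¬ ∃ (p : Fin 2 → I) (S : Set (Fin 2 → I)), IsSemispaceAt S p ∧ z ∈ S ∧
      S ∩ {w : Fin 2 → I | a ≤ w 1 ∧ w 1 ≤ b} = ∅ :=
  stmt7_general a b hab z hz
end

section
/- In [0,1]^2, let a=(x_a,y_a), b=(x_b,y_b), c=(x_c,y_c) with x_a ≤ x_b ≤ x_c, y_b ≤ y_a ≤ y_c, and let B_0 = [x_a,x_c]×[y_b,y_c]. Then the set T_1 = B_0 ∩ {(x,y) : x < x_b, y < y_a} is max-min convex. -/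
open unitInterval

/-! Every coordinate of a point on a max-min segment lies between the corresponding coordinates
of its endpoints, so any product of order-connected subsets of `I` is max-min convex; `T₁` is the
product of `[x_a, x_c] ∩ [0, x_b)` and `[y_b, y_c] ∩ [0, y_a)`. -/

open Set

lemma segPt_apply_mem_uIcc {n : ℕ} {α β : I} (hαβ : max α β = 1) (x y : Fin n → I)
    (i : Fin n) : segPt α β x y i ∈ uIcc (x i) (y i) := by
  refine ⟨?_, max_le_max (min_le_right _ _) (min_le_right _ _)⟩
  rcases max_choice α β with h | h <;> rw [h] at hαβ <;> subst hαβ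
  · exact (min_le_left _ _).trans (le_max_of_le_left (le_min le_one' le_rfl))
  · exact (min_le_right _ _).trans (le_max_of_le_right (le_min le_one' le_rfl))

lemma maxMinConvex_pi {n : ℕ} (S : Fin n → Set I) (hS : ∀ i, (S i).OrdConnected) :
    MaxMinConvex (univ.pi S) := fun x hx y hy _ _ hαβ i _ =>
  (hS i).uIcc_subset (hx i trivial) (hy i trivial) (segPt_apply_mem_uIcc hαβ x y i)

theorem stmt10_general (xa ya xb yb xc yc : I) :
    MaxMinConvex {z : Fin 2 → I |
      (xa ≤ z 0 ∧ z 0 ≤ xc) ∧ (yb ≤ z 1 ∧ z 1 ≤ yc) ∧ z 0 < xb ∧ z 1 < ya} := by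
  convert maxMinConvex_pi ![Icc xa xc ∩ Iio xb, Icc yb yc ∩ Iio ya]
    (Fin.forall_fin_two.2 ⟨ordConnected_Icc.inter ordConnected_Iio,
      ordConnected_Icc.inter ordConnected_Iio⟩) using 1
  ext z
  simp only [mem_ofPred_eq, mem_univ_pi, Fin.forall_fin_two, Matrix.cons_val_zero,
    Matrix.cons_val_one, mem_inter_iff, mem_Icc, mem_Iio]
  tauto

theorem stmt10 (xa ya xb yb xc yc : I)
    (h1 : xa ≤ xb) (h2 : xb ≤ xc) (h3 : yb ≤ ya) (h4 : ya ≤ yc) :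
    MaxMinConvex {z : Fin 2 → I |
      (xa ≤ z 0 ∧ z 0 ≤ xc) ∧ (yb ≤ z 1 ∧ z 1 ≤ yc) ∧ z 0 < xb ∧ z 1 < ya} :=
  stmt10_general xa ya xb yb xc yc
end

section
/- Let 0 ≤ a < b ≤ 1, C_1 = [(a,a,a),(b,b,b)]_M and C_2 = [(b,a,a),(a,b,a)]_M in [0,1]^3. Then C_1 ∩ C_2 = ∅, the smallest box containing C_1 is [a,b]^3, the smallest box containing C_2 is [a,b]×[a,b]×{a}, and hence the smallest box of C_2 is contained in the smallest box of C_1; consequently there is no box containing one of the two sets and disjoint from the other. -/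
/-! Every point of a max-min segment `[x, y]_M` lies coordinatewise between `x ⊓ y` and `x ⊔ y`,
and both endpoints lie on it, so the smallest box containing `[x, y]_M` is `[x ⊓ y, x ⊔ y]`.
For `C_2` this box `[a, b] × [a, b] × {a}` lies inside `[a, b]^3`, the box of `C_1`; hence a
box containing either set contains a point of the other. The sets are still disjoint: points
of `C_1` have equal coordinates, while a point of `C_2` has third coordinate `a` and first or
second coordinate at least `b`. -/

open unitInterval

def Box3 (lo hi : Fin 3 → I) : Set (Fin 3 → I) :=
  {z | ∀ i, lo i ≤ z i ∧ z i ≤ hi i}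

theorem Box3_eq_Icc (lo hi : Fin 3 → I) : Box3 lo hi = Set.Icc lo hi := by
  ext z
  simp only [Box3, Set.mem_ofPred_eq, Set.mem_Icc, Pi.le_def, forall_and]

section MaxMinSegment

variable {n : ℕ} {α β : I} {x y : Fin n → I}

theorem unitInterval.eq_one_or_eq_one_of_max_eq_one (h : max α β = 1) : α = 1 ∨ β = 1 := by
  rcases max_choice α β with h' | h' <;> rw [h'] at h <;> simp [h]

theorem left_mem_maxMinSegment (x y : Fin n → I) : x ∈ maxMinSegment x y :=
  ⟨1, 0, by simp, by funext i; simp [segPt, le_one']⟩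

theorem right_mem_maxMinSegment (x y : Fin n → I) : y ∈ maxMinSegment x y :=
  ⟨0, 1, by simp, by funext i; simp [segPt, le_one']⟩

theorem le_segPt_left (hα : α = 1) (i : Fin n) : x i ≤ segPt α β x y i := by
  simp [segPt, hα, le_one']

theorem le_segPt_right (hβ : β = 1) (i : Fin n) : y i ≤ segPt α β x y i := by
  simp [segPt, hβ, le_one']

theorem segPt_apply_of_eq (h : max α β = 1) {i : Fin n} (hi : x i = y i) :
    segPt α β x y i = x i :=
  le_antisymm (max_le (min_le_right _ _) (hi ▸ min_le_right _ _)) <| by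
    rcases eq_one_or_eq_one_of_max_eq_one h with hα | hβ
    · exact le_segPt_left hα i
    · exact hi ▸ le_segPt_right hβ i

theorem segPt_mem_Icc (h : max α β = 1) : segPt α β x y ∈ Set.Icc (x ⊓ y) (x ⊔ y) := by
  refine ⟨fun i => ?_, fun i => max_le_max (min_le_right _ _) (min_le_right _ _)⟩
  rcases eq_one_or_eq_one_of_max_eq_one h with hα | hβ
  · exact inf_le_left.trans (le_segPt_left hα i)
  · exact inf_le_right.trans (le_segPt_right hβ i)

theorem maxMinSegment_subset_Icc (x y : Fin n → I) :
    maxMinSegment x y ⊆ Set.Icc (x ⊓ y) (x ⊔ y) := by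
  rintro _ ⟨α, β, h, rfl⟩
  exact segPt_mem_Icc h

theorem Icc_inf_sup_subset_of_maxMinSegment_subset {lo hi : Fin n → I}
    (h : maxMinSegment x y ⊆ Set.Icc lo hi) : Set.Icc (x ⊓ y) (x ⊔ y) ⊆ Set.Icc lo hi :=
  have hx := h (left_mem_maxMinSegment x y)
  have hy := h (right_mem_maxMinSegment x y)
  Set.Icc_subset_Icc (le_inf hx.1 hy.1) (sup_le hx.2 hy.2)

end MaxMinSegment

section TwoSegments

variable {a b : I}

theorem inf_diag_eq (hab : a ≤ b) : (![a, a, a] ⊓ ![b, b, b] : Fin 3 → I) = ![a, a, a] := by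
  funext i; fin_cases i <;> simp [hab]

theorem sup_diag_eq (hab : a ≤ b) : (![a, a, a] ⊔ ![b, b, b] : Fin 3 → I) = ![b, b, b] := by
  funext i; fin_cases i <;> simp [hab]

theorem inf_swap_eq (hab : a ≤ b) : (![b, a, a] ⊓ ![a, b, a] : Fin 3 → I) = ![a, a, a] := by
  funext i; fin_cases i <;> simp [hab]

theorem sup_swap_eq (hab : a ≤ b) : (![b, a, a] ⊔ ![a, b, a] : Fin 3 → I) = ![b, b, a] := by
  funext i; fin_cases i <;> simp [hab]

theorem maxMinSegment_diag_inter_swap (hab : a < b) :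
    maxMinSegment ![a, a, a] ![b, b, b] ∩ maxMinSegment ![b, a, a] ![a, b, a] = ∅ := by
  refine Set.eq_empty_of_forall_notMem ?_
  rintro _ ⟨⟨α, β, hαβ, rfl⟩, γ, δ, hγδ, heq⟩
  have hconst : ∀ i, segPt α β ![a, a, a] ![b, b, b] i = segPt α β ![a, a, a] ![b, b, b] 2 :=
    fun i => by fin_cases i <;> rfl
  have hthird : segPt γ δ ![b, a, a] ![a, b, a] 2 = a := segPt_apply_of_eq hγδ rfl
  rcases eq_one_or_eq_one_of_max_eq_one hγδ with hγ | hδ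
  · have h0 := le_segPt_left (β := δ) (x := ![b, a, a]) (y := ![a, b, a]) hγ 0
    rw [← heq, hconst, heq, hthird] at h0
    exact hab.not_ge h0
  · have h1 := le_segPt_right (α := γ) (x := ![b, a, a]) (y := ![a, b, a]) hδ 1
    rw [← heq, hconst, heq, hthird] at h1
    exact hab.not_ge h1

end TwoSegments

theorem stmt14 (a b : I) (hab : a < b) :
    maxMinSegment (![a, a, a]) (![b, b, b]) ∩
      maxMinSegment (![b, a, a]) (![a, b, a]) = ∅ ∧
    (maxMinSegment (![a, a, a]) (![b, b, b]) ⊆ Box3 ![a, a, a] ![b, b, b] ∧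
      ∀ lo hi : Fin 3 → I, (∀ i, lo i ≤ hi i) →
        maxMinSegment (![a, a, a]) (![b, b, b]) ⊆ Box3 lo hi →
        Box3 ![a, a, a] ![b, b, b] ⊆ Box3 lo hi) ∧
    (maxMinSegment (![b, a, a]) (![a, b, a]) ⊆ Box3 ![a, a, a] ![b, b, a] ∧
      ∀ lo hi : Fin 3 → I, (∀ i, lo i ≤ hi i) →
        maxMinSegment (![b, a, a]) (![a, b, a]) ⊆ Box3 lo hi →
        Box3 ![a, a, a] ![b, b, a] ⊆ Box3 lo hi) ∧
    Box3 ![a, a, a] ![b, b, a] ⊆ Box3 ![a, a, a] ![b, b, b] ∧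
    ¬ ∃ lo hi : Fin 3 → I, (∀ i, lo i ≤ hi i) ∧
      ((maxMinSegment (![a, a, a]) (![b, b, b]) ⊆ Box3 lo hi ∧
          Box3 lo hi ∩ maxMinSegment (![b, a, a]) (![a, b, a]) = ∅) ∨
        (maxMinSegment (![b, a, a]) (![a, b, a]) ⊆ Box3 lo hi ∧
          Box3 lo hi ∩ maxMinSegment (![a, a, a]) (![b, b, b]) = ∅)) := by
  simp only [Box3_eq_Icc]
  have hC₁ := maxMinSegment_subset_Icc ![a, a, a] ![b, b, b]
  have hmin₁ := @Icc_inf_sup_subset_of_maxMinSegment_subset _ ![a, a, a] ![b, b, b]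
  have hC₂ := maxMinSegment_subset_Icc ![b, a, a] ![a, b, a]
  have hmin₂ := @Icc_inf_sup_subset_of_maxMinSegment_subset _ ![b, a, a] ![a, b, a]
  rw [inf_diag_eq hab.le, sup_diag_eq hab.le] at hC₁ hmin₁
  rw [inf_swap_eq hab.le, sup_swap_eq hab.le] at hC₂ hmin₂
  have hlo : (![a, a, a] : Fin 3 → I) ≤ ![b, b, a] := by
    intro i; fin_cases i <;> simp [hab.le]
  have hbox : Set.Icc ![a, a, a] ![b, b, a] ⊆ Set.Icc ![a, a, a] ![b, b, b] :=
    Set.Icc_subset_Icc_right (by intro i; fin_cases i <;> simp [hab.le])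
  refine ⟨maxMinSegment_diag_inter_swap hab, ⟨hC₁, fun _ _ _ => hmin₁⟩,
    ⟨hC₂, fun _ _ _ => hmin₂⟩, hbox, ?_⟩
  rintro ⟨lo, hi, -, ⟨hsub, hdisj⟩ | ⟨hsub, hdisj⟩⟩
  · exact Set.eq_empty_iff_forall_notMem.mp hdisj _
      ⟨hmin₁ hsub (hbox (hC₂ (left_mem_maxMinSegment _ _))), left_mem_maxMinSegment _ _⟩
  · exact Set.eq_empty_iff_forall_notMem.mp hdisj _
      ⟨hmin₂ hsub ⟨le_rfl, hlo⟩, left_mem_maxMinSegment _ _⟩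
end

section
/- Let C_1, C_2 ⊆ [0,1]^2 be nonempty compact max-min convex sets with C_1 ∩ C_2 = ∅. Then there exists a box B = [p_1,q_1]×[p_2,q_2] ⊆ [0,1]^2 and a choice i ∈ {1,2} such that C_i ⊆ B and B ∩ C_{3-i} = ∅. -/
/-!
Max-min convexity with `α = 1` makes a set closed under coordinatewise maxima, so a nonempty
compact max-min convex set has a greatest element: `q` for `C₁` and `s` for `C₂`, say with
`min q ≤ min s` and `q₀ ≤ q₁`. Then the bounding box `[p, q]` of `C₁` misses `C₂`: if `y ∈ C₂` lies
in it and `b ∈ C₁` has `b₁ = p₁`, the point `b ∨ (max q₀ y₁ ∧ q)` of `C₁` coincides with the point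
`y ∨ (q₀ ∧ s)` of `C₂`.
-/

open unitInterval

def Box2 (p q : Fin 2 → I) : Set (Fin 2 → I) :=
  {z | ∀ i, p i ≤ z i ∧ z i ≤ q i}

lemma Box2_eq_Icc (p q : Fin 2 → I) : Box2 p q = Set.Icc p q := by
  ext z
  exact forall_and

lemma segPt_one_left_apply {n : ℕ} (β : I) (x y : Fin n → I) (k : Fin n) :
    segPt 1 β x y k = max (x k) (min β (y k)) := by
  rw [segPt, min_eq_right le_one']

lemma segPt_one_one {n : ℕ} (x y : Fin n → I) : segPt 1 1 x y = x ⊔ y := by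
  funext k
  rw [segPt_one_left_apply, min_eq_right le_one']
  rfl

namespace MaxMinConvex

variable {n : ℕ} {C : Set (Fin n → I)}

lemma segPt_one_left_mem (hC : MaxMinConvex C) {x y : Fin n → I} (hx : x ∈ C) (hy : y ∈ C)
    (β : I) : segPt 1 β x y ∈ C :=
  hC x hx y hy 1 β (max_eq_left le_one')

lemma supClosed (hC : MaxMinConvex C) : SupClosed C := fun x hx y hy => by
  simpa only [segPt_one_one] using hC.segPt_one_left_mem hx hy 1

end MaxMinConvex

section CompactSubsetsOfPi

variable {ι α : Type*} [LinearOrder α] [TopologicalSpace α] {C : Set (ι → α)}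

lemma SupClosed.exists_isGreatest_of_isCompact [Fintype ι] [ClosedIciTopology α]
    (hC : SupClosed C) (hne : C.Nonempty) (hc : IsCompact C) : ∃ q, IsGreatest C q := by
  rcases isEmpty_or_nonempty ι with hι | hι
  · obtain ⟨x, hx⟩ := hne
    exact ⟨x, hx, fun y _ => le_of_eq (Subsingleton.elim y x)⟩
  have hmax : ∀ i, ∃ c ∈ C, IsMaxOn (fun x => x i) C c := fun i =>
    hc.exists_isMaxOn hne (continuous_apply i).continuousOn
  choose c hcC hcmax using hmax
  refine ⟨Finset.univ.sup' Finset.univ_nonempty c,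
    hC.finsetSup'_mem Finset.univ_nonempty fun i _ => hcC i, fun x hx i => ?_⟩
  calc x i ≤ c i i := hcmax i hx
    _ ≤ Finset.univ.sup' Finset.univ_nonempty c i :=
      Finset.le_sup' c (Finset.mem_univ i) i

lemma IsCompact.exists_mem_lowerBounds_apply_mem_image_eval [ClosedIicTopology α]
    (hne : C.Nonempty) (hc : IsCompact C) :
    ∃ p ∈ lowerBounds C, ∀ k, p k ∈ Function.eval k '' C := by
  have hmin : ∀ k, ∃ b ∈ C, IsMinOn (fun x => x k) C b := fun k =>
    hc.exists_isMinOn hne (continuous_apply k).continuousOn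
  choose b hbC hbmin using hmin
  exact ⟨fun k => b k k, fun x hx k => hbmin k hx, fun k => ⟨b k, hbC k, rfl⟩⟩

end CompactSubsetsOfPi

lemma Fin.two_eq_or_eq_of_ne {i j : Fin 2} (hij : i ≠ j) (k : Fin 2) : k = i ∨ k = j := by
  omega

lemma segPt_one_max_eq_segPt_one {i j : Fin 2} (hij : i ≠ j) {b q y s : Fin 2 → I}
    (hbq : b i ≤ q i) (hby : b j ≤ y j) (hyq : y ≤ q) (hqij : q i ≤ q j)
    (hqs : ∀ k, q i ≤ s k) :
    segPt 1 (max (q i) (y j)) b q = segPt 1 (q i) y s := by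
  funext k
  simp only [segPt_one_left_apply]
  rcases Fin.two_eq_or_eq_of_ne hij k with rfl | rfl
  · rw [min_eq_right (le_max_left _ _), min_eq_left (hqs k), max_eq_right hbq,
      max_eq_right (hyq k)]
  · rw [min_eq_left (max_le hqij (hyq k)), min_eq_left (hqs k),
      max_eq_right (hby.trans (le_max_right _ _)), max_comm]

lemma Box2_inter_eq_empty_of_min_le {C₁ C₂ : Set (Fin 2 → I)}
    (h₁ : MaxMinConvex C₁) (h₂ : MaxMinConvex C₂) (hdisj : Disjoint C₁ C₂)
    {p q s : Fin 2 → I} (hp : ∀ k, p k ∈ Function.eval k '' C₁) (hq : IsGreatest C₁ q)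
    (hs : s ∈ C₂) (hqs : min (q 0) (q 1) ≤ min (s 0) (s 1)) :
    Box2 p q ∩ C₂ = ∅ := by
  obtain ⟨i, j, hij, hqij⟩ : ∃ i j : Fin 2, i ≠ j ∧ q i ≤ q j := by
    rcases le_total (q 0) (q 1) with h | h
    exacts [⟨0, 1, by decide, h⟩, ⟨1, 0, by decide, h⟩]
  have hqi : ∀ k, q i ≤ q k := fun k => by
    rcases Fin.two_eq_or_eq_of_ne hij k with rfl | rfl
    exacts [le_rfl, hqij]
  have hqis : ∀ k, q i ≤ s k := fun k =>
    calc q i ≤ min (q 0) (q 1) := le_min (hqi 0) (hqi 1)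
      _ ≤ min (s 0) (s 1) := hqs
      _ ≤ s k := by fin_cases k <;> simp
  rw [Set.eq_empty_iff_forall_notMem]
  rintro y ⟨hyB, hy⟩
  rw [Box2_eq_Icc] at hyB
  obtain ⟨b, hb, hbj⟩ := hp j
  have hmem₁ := h₁.segPt_one_left_mem hb hq.1 (max (q i) (y j))
  rw [segPt_one_max_eq_segPt_one hij (hq.2 hb i) (hbj.trans_le (hyB.1 j)) hyB.2 hqij hqis]
    at hmem₁
  exact Set.disjoint_left.mp hdisj hmem₁ (h₂.segPt_one_left_mem hy hs (q i))

lemma exists_Box2_of_min_le {C₁ C₂ : Set (Fin 2 → I)}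
    (h₁ : MaxMinConvex C₁) (h₂ : MaxMinConvex C₂) (hdisj : Disjoint C₁ C₂)
    (hne : C₁.Nonempty) (hc : IsCompact C₁) {q s : Fin 2 → I} (hq : IsGreatest C₁ q)
    (hs : s ∈ C₂) (hqs : min (q 0) (q 1) ≤ min (s 0) (s 1)) :
    ∃ p q : Fin 2 → I, (∀ i, p i ≤ q i) ∧ C₁ ⊆ Box2 p q ∧ Box2 p q ∩ C₂ = ∅ := by
  obtain ⟨p, hplow, hp⟩ := hc.exists_mem_lowerBounds_apply_mem_image_eval hne
  refine ⟨p, q, hplow hq.1, fun x hx => ?_,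
    Box2_inter_eq_empty_of_min_le h₁ h₂ hdisj hp hq hs hqs⟩
  rw [Box2_eq_Icc]
  exact ⟨hplow hx, hq.2 hx⟩

theorem stmt17 (C1 C2 : Set (Fin 2 → I))
    (h1ne : C1.Nonempty) (h2ne : C2.Nonempty)
    (h1c : IsCompact C1) (h2c : IsCompact C2)
    (h1conv : MaxMinConvex C1) (h2conv : MaxMinConvex C2)
    (hdisj : C1 ∩ C2 = ∅) :
    (∃ p q : Fin 2 → I, (∀ i, p i ≤ q i) ∧ C1 ⊆ Box2 p q ∧ Box2 p q ∩ C2 = ∅) ∨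
    (∃ p q : Fin 2 → I, (∀ i, p i ≤ q i) ∧ C2 ⊆ Box2 p q ∧ Box2 p q ∩ C1 = ∅) := by
  have hdisj' : Disjoint C1 C2 := Set.disjoint_iff_inter_eq_empty.mpr hdisj
  obtain ⟨q, hq⟩ := h1conv.supClosed.exists_isGreatest_of_isCompact h1ne h1c
  obtain ⟨s, hs⟩ := h2conv.supClosed.exists_isGreatest_of_isCompact h2ne h2c
  rcases le_total (min (q 0) (q 1)) (min (s 0) (s 1)) with hqs | hsq
  · exact .inl (exists_Box2_of_min_le h1conv h2conv hdisj' h1ne h1c hq hs.1 hqs)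
  · exact .inr (exists_Box2_of_min_le h2conv h1conv hdisj'.symm h2ne h2c hs hq.1 hsq)
end
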